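/- arXiv:2509.09756 — 2 statements merged into one kernel-verified Lean document; each statement's English description precedes it below -/
import Mathlib

section
/- For any continuous CDF G with PDF g, the function F(x) = G(x) + p·(1−G(x))·log(1−G(x)), for 0 < p < 1, is a valid CDF: it is nondecreasing, tends to 0 as G(x)→0, and tends to 1 as G(x)→1. -/
open Real Filter Set

/-- The record-based transmutation map on the CDF level:
`φ p t = t + p * (1 - t) * log (1 - t)`. -/
noncomputable def rbtMap (p t : ℝ) : ℝ := t + p * (1 - t) * Real.log (1 - t)

lemma rbtMap_continuous (p : ℝ) : Continuous (rbtMap p) := by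
  have h : Continuous fun t : ℝ => (1 - t) * Real.log (1 - t) :=
    Real.continuous_mul_log.comp (continuous_const.sub continuous_id)
  have : (rbtMap p) = fun t => t + p * ((1 - t) * Real.log (1 - t)) := by
    funext t; simp [rbtMap, mul_assoc]
  rw [this]
  exact continuous_id.add (continuous_const.mul h)

lemma rbtMap_hasDerivAt (p t : ℝ) (ht : t < 1) :
    HasDerivAt (rbtMap p) (1 - p - p * Real.log (1 - t)) t := by
  have h1 : HasDerivAt (fun t : ℝ => 1 - t) (-1) t := by
    simpa using (hasDerivAt_id t).const_sub 1
  have hne : (1 : ℝ) - t ≠ 0 := by linarith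
  have hlog : HasDerivAt (fun t : ℝ => Real.log (1 - t)) ((1 - t)⁻¹ * -1) t :=
    (Real.hasDerivAt_log hne).comp t h1
  have hprod : HasDerivAt (fun t : ℝ => (1 - t) * Real.log (1 - t))
      ((-1) * Real.log (1 - t) + (1 - t) * ((1 - t)⁻¹ * -1)) t := h1.mul hlog
  have h2 : HasDerivAt (fun t : ℝ => t + p * ((1 - t) * Real.log (1 - t)))
      (1 + p * ((-1) * Real.log (1 - t) + (1 - t) * ((1 - t)⁻¹ * -1))) t :=
    (hasDerivAt_id t).add (hprod.const_mul p)
  have heq : (fun t : ℝ => t + p * ((1 - t) * Real.log (1 - t))) = rbtMap p := by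
    funext t; simp [rbtMap, mul_assoc]
  rw [heq] at h2
  convert h2 using 1
  field_simp
  ring

lemma rbtMap_monotoneOn (p : ℝ) (hp0 : 0 < p) (hp1 : p < 1) :
    MonotoneOn (rbtMap p) (Set.Ico (0:ℝ) 1) := by
  have hconv : Convex ℝ (Set.Ico (0:ℝ) 1) := convex_Ico 0 1
  refine monotoneOn_of_deriv_nonneg hconv ((rbtMap_continuous p).continuousOn) ?_ ?_
  · intro t ht
    rw [interior_Ico] at ht
    exact ((rbtMap_hasDerivAt p t ht.2).differentiableAt).differentiableWithinAt
  · intro t ht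
    rw [interior_Ico] at ht
    rw [(rbtMap_hasDerivAt p t ht.2).deriv]
    have hlog : Real.log (1 - t) ≤ 0 :=
      Real.log_nonpos (by linarith [ht.2]) (by linarith [ht.1])
    nlinarith

/-- For any CDF `G` (nondecreasing, with values in `[0,1)`) and `0 < p < 1`, the
record-based transmuted function `F = G + p (1-G) log(1-G)` is a valid CDF:
it is nondecreasing, tends to `0` as `G(x) → 0`, and tends to `1` as `G(x) → 1`. -/
theorem rbt_is_valid_cdf (p : ℝ) (hp0 : 0 < p) (hp1 : p < 1) :
    (∀ G : ℝ → ℝ, Monotone G → (∀ x, G x ∈ Set.Ico (0:ℝ) 1) →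
      Monotone (fun x => rbtMap p (G x))) ∧
    Tendsto (rbtMap p) (nhdsWithin 0 (Set.Ico (0:ℝ) 1)) (nhds 0) ∧
    Tendsto (rbtMap p) (nhdsWithin 1 (Set.Ico (0:ℝ) 1)) (nhds 1) := by
  refine ⟨?_, ?_, ?_⟩
  · intro G hG hG01 x y hxy
    exact rbtMap_monotoneOn p hp0 hp1 (hG01 x) (hG01 y) (hG hxy)
  · have h0 : rbtMap p 0 = 0 := by simp [rbtMap]
    have := ((rbtMap_continuous p).tendsto 0).mono_left (nhdsWithin_le_nhds (s := Set.Ico (0:ℝ) 1))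
    rwa [h0] at this
  · have h1 : rbtMap p 1 = 1 := by simp [rbtMap]
    have := ((rbtMap_continuous p).tendsto 1).mono_left (nhdsWithin_le_nhds (s := Set.Ico (0:ℝ) 1))
    rwa [h1] at this
end

section
/- Let X ~ RBTC(ω, κ, p₁) and Y ~ RBTC(ω, κ, p₂) with 0 < p₁ < p₂ < 1. Then the ratio of densities g(x) = f_X(x)/f_Y(x) = (1 − p₁ω + p₁ω e^{x^κ} − p₁)/(1 − p₂ω + p₂ω e^{x^κ} − p₂) is strictly decreasing in x on (0, ∞); i.e., X is smaller than Y in the likelihood ratio order. -/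
open Real Set

/-- RBTC density with parameters `ω, κ, p`. -/
noncomputable def rbtcPDF (ω κ p x : ℝ) : ℝ :=
  ω * κ * x ^ (κ - 1) * Real.exp (ω * (1 - Real.exp (x ^ κ)) + x ^ κ) *
    (1 - p * ω * (1 - Real.exp (x ^ κ)) - p)

/-- For `X ∼ RBTC(ω, κ, p₁)` and `Y ∼ RBTC(ω, κ, p₂)` with `0 < p₁ < p₂ < 1`,
the density ratio
`f_X/f_Y = (1 − p₁ω + p₁ω e^{x^κ} − p₁)/(1 − p₂ω + p₂ω e^{x^κ} − p₂)`
is strictly decreasing on `(0, ∞)`: `X` is smaller than `Y` in the likelihood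
ratio order. -/
theorem rbtc_likelihood_ratio_order (ω κ p₁ p₂ : ℝ) (hω : 0 < ω) (hκ : 0 < κ)
    (hp₁ : 0 < p₁) (h12 : p₁ < p₂) (hp₂ : p₂ < 1) :
    (∀ x > (0:ℝ), rbtcPDF ω κ p₁ x / rbtcPDF ω κ p₂ x
      = (1 - p₁ * ω + p₁ * ω * Real.exp (x ^ κ) - p₁) /
        (1 - p₂ * ω + p₂ * ω * Real.exp (x ^ κ) - p₂)) ∧
    StrictAntiOn (fun x : ℝ =>
      (1 - p₁ * ω + p₁ * ω * Real.exp (x ^ κ) - p₁) /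
        (1 - p₂ * ω + p₂ * ω * Real.exp (x ^ κ) - p₂)) (Set.Ioi 0) := by
  constructor
  · intro x hx
    have h1 : (0:ℝ) < x ^ (κ - 1) := Real.rpow_pos_of_pos hx _
    have hC : ω * κ * x ^ (κ - 1) * Real.exp (ω * (1 - Real.exp (x ^ κ)) + x ^ κ) ≠ 0 := by
      have := Real.exp_pos (ω * (1 - Real.exp (x ^ κ)) + x ^ κ)
      positivity
    unfold rbtcPDF
    rw [mul_div_mul_left _ _ hC]
    ring
  · intro x hx y hy hxy
    simp only [Set.mem_Ioi] at hx hy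
    have hxk : (0:ℝ) < x ^ κ := Real.rpow_pos_of_pos hx _
    have hEx : 1 < Real.exp (x ^ κ) := by
      calc (1:ℝ) = Real.exp 0 := Real.exp_zero.symm
        _ < Real.exp (x ^ κ) := Real.exp_lt_exp.mpr hxk
    have hEy : 1 < Real.exp (y ^ κ) := by
      have : (0:ℝ) < y ^ κ := Real.rpow_pos_of_pos hy _
      calc (1:ℝ) = Real.exp 0 := Real.exp_zero.symm
        _ < Real.exp (y ^ κ) := Real.exp_lt_exp.mpr this
    have hExy : Real.exp (x ^ κ) < Real.exp (y ^ κ) :=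
      Real.exp_lt_exp.mpr (Real.rpow_lt_rpow hx.le hxy hκ)
    have hd2x : 0 < 1 - p₂ * ω + p₂ * ω * Real.exp (x ^ κ) - p₂ := by nlinarith [mul_pos (mul_pos (hp₁.trans h12) hω) (sub_pos.mpr hEx)]
    have hd2y : 0 < 1 - p₂ * ω + p₂ * ω * Real.exp (y ^ κ) - p₂ := by nlinarith [mul_pos (mul_pos (hp₁.trans h12) hω) (sub_pos.mpr hEy)]
    simp only
    rw [div_lt_div_iff₀ hd2y hd2x]
    nlinarith [mul_pos hω (mul_pos (sub_pos.mpr h12) (sub_pos.mpr hExy))]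
end
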